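/- arXiv:math/0702877 — 10 statements merged into one kernel-verified Lean document; each statement's English description precedes it below -/
import Mathlib

section
/- Let p be a prime and let m > n > 1 be integers. Then there exists a non-negative integer i₀ (depending on m, n and p) such that for every integer i ≥ i₀ and every positive integer j not divisible by p, Σ_{h=0}^{i−1} (s_p(m,h,j) − s_p(n,h,j)) ≥ s_p(n,i,j). -/
/-- `sP p m i j` is the cardinality of `{1,2,…,m(i+1)} ∩ {j, pj, p²j, …}`, i.e. the number
of integers `k ≥ 0` with `p^k * j ≤ m * (i+1)` (for `p ≥ 2`, `j ≥ 1` all such `k` lie in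
`Finset.range (m * (i+1))`). -/
def sP (p m i j : ℕ) : ℕ :=
  ((Finset.range (m * (i + 1))).filter (fun k => p ^ k * j ≤ m * (i + 1))).card

/-- The filter range may be enlarged without changing the count. -/
lemma sP_eq_big (p a i j R : ℕ) (hp : 2 ≤ p) (hj : 0 < j) (hR : a * (i + 1) ≤ R) :
    sP p a i j = ((Finset.range R).filter (fun k => p ^ k * j ≤ a * (i + 1))).card := by
  unfold sP
  have hset : ((Finset.range (a * (i + 1))).filter (fun k => p ^ k * j ≤ a * (i + 1)))
      = ((Finset.range R).filter (fun k => p ^ k * j ≤ a * (i + 1))) := by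
    ext k
    simp only [Finset.mem_filter, Finset.mem_range]
    constructor
    · rintro ⟨hk, hle⟩; exact ⟨lt_of_lt_of_le hk hR, hle⟩
    · rintro ⟨hk, hle⟩
      refine ⟨?_, hle⟩
      calc k < p ^ k := Nat.lt_pow_self (by omega)
      _ ≤ p ^ k * j := Nat.le_mul_of_pos_right _ hj
      _ ≤ a * (i + 1) := hle
  rw [hset]

lemma sP_mono (p m n h j : ℕ) (hp : 2 ≤ p) (hj : 0 < j) (hnm : n ≤ m) :
    sP p n h j ≤ sP p m h j := by
  rw [sP_eq_big p n h j (m * (h + 1)) hp hj (Nat.mul_le_mul_right _ hnm)]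
  unfold sP
  apply Finset.card_le_card
  apply Finset.monotone_filter_right
  intro k _ hle
  exact le_trans hle (Nat.mul_le_mul_right _ hnm)

lemma sP_lt (p m n h j k : ℕ) (hp : 2 ≤ p) (hj : 0 < j) (hnm : n ≤ m)
    (h1 : n * (h + 1) < p ^ k * j) (h2 : p ^ k * j ≤ m * (h + 1)) :
    sP p n h j < sP p m h j := by
  rw [sP_eq_big p n h j (m * (h + 1)) hp hj (Nat.mul_le_mul_right _ hnm)]
  unfold sP
  apply Finset.card_lt_card
  rw [Finset.ssubset_iff_of_subset]
  · refine ⟨k, ?_, ?_⟩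
    · simp only [Finset.mem_filter, Finset.mem_range]
      refine ⟨?_, h2⟩
      calc k < p ^ k := Nat.lt_pow_self (by omega)
      _ ≤ p ^ k * j := Nat.le_mul_of_pos_right _ hj
      _ ≤ m * (h + 1) := h2
    · simp only [Finset.mem_filter, Finset.mem_range]
      intro hmem
      omega
  · apply Finset.monotone_filter_right
    intro x _ hle
    exact le_trans hle (Nat.mul_le_mul_right _ hnm)

lemma sq_le_four_two_pow (L : ℕ) : L * L ≤ 4 * 2 ^ L := by
  induction L with
  | zero => simp
  | succ L ih =>
    have h1 : L < 2 ^ L := Nat.lt_two_pow_self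
    have : 2 ^ (L + 1) = 2 * 2 ^ L := by ring
    nlinarith

set_option maxHeartbeats 1000000 in
/-- Theorem (divisor)(i): for `m > n > 1` there is `i₀` such that for all `i ≥ i₀` and all
positive `j` not divisible by `p`,
`Σ_{h=0}^{i−1} (s_p(m,h,j) − s_p(n,h,j)) ≥ s_p(n,i,j)`. -/
theorem divisor_i (p m n : ℕ) (hp : p.Prime) (hmn : m > n) (hn : n > 1) :
    ∃ i₀ : ℕ, ∀ i : ℕ, i ≥ i₀ → ∀ j : ℕ, 0 < j → ¬ p ∣ j →
      (sP p n i j : ℤ) ≤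
        ∑ h ∈ Finset.range i, ((sP p m h j : ℤ) - (sP p n h j : ℤ)) := by
  have hp2 : 2 ≤ p := hp.two_le
  have hn2 : 2 ≤ n := hn
  have hm3 : 3 ≤ m := by omega
  refine ⟨256 * (p * m * n) ^ 2, ?_⟩
  intro i hi j hj _hpj
  have hi1 : 1 ≤ i := by
    have hpmn : 1 ≤ (p * m * n) ^ 2 := Nat.one_le_pow _ _ (by positivity)
    omega
  by_cases hjn : n * (i + 1) < j
  · -- trivial case : sP p n i j = 0
    have hK : sP p n i j = 0 := by
      unfold sP
      rw [Finset.card_eq_zero, Finset.filter_eq_empty_iff]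
      intro k _
      simp only [not_le]
      calc n * (i + 1) < j := hjn
      _ = 1 * j := (one_mul j).symm
      _ ≤ p ^ k * j := Nat.mul_le_mul_right _ (Nat.one_le_two_pow.trans
          (Nat.pow_le_pow_left (by omega) k))
    rw [hK]
    push_cast
    apply Finset.sum_nonneg
    intro h _
    have := sP_mono p m n h j hp2 hj (le_of_lt hmn)
    have h1 : (sP p n h j : ℤ) ≤ (sP p m h j : ℤ) := by exact_mod_cast this
    omega
  · push_neg at hjn
    obtain ⟨K, hKdef⟩ : ∃ K, K = sP p n i j := ⟨_, rfl⟩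
    obtain ⟨L, hLdef⟩ : ∃ L, L = Nat.log 2 (n * (i + 1)) := ⟨_, rfl⟩
    rw [← hKdef]
    have hnipos : 0 < n * (i + 1) := by positivity
    -- K ≤ L + 1
    have hKL : K ≤ L + 1 := by
      rw [hKdef]
      unfold sP
      calc ((Finset.range (n * (i + 1))).filter (fun k => p ^ k * j ≤ n * (i + 1))).card
          ≤ (Finset.range (L + 1)).card := by
            apply Finset.card_le_card
            intro k hk
            simp only [Finset.mem_filter, Finset.mem_range] at hk ⊢
            have h2k : 2 ^ k ≤ n * (i + 1) := by
              calc 2 ^ k ≤ p ^ k := Nat.pow_le_pow_left hp2 k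
              _ ≤ p ^ k * j := Nat.le_mul_of_pos_right _ hj
              _ ≤ n * (i + 1) := hk.2
            have := (Nat.le_log_iff_pow_le (by norm_num) (by omega)).mpr h2k
            omega
      _ = L + 1 := Finset.card_range _
    -- L ≤ sqrt (4 * (n * (i+1)))
    obtain ⟨s, hsdef⟩ : ∃ s, s = Nat.sqrt (4 * (n * (i + 1))) := ⟨_, rfl⟩
    have hLs : L ≤ s := by
      rw [hsdef, Nat.le_sqrt]
      calc L * L ≤ 4 * 2 ^ L := sq_le_four_two_pow L
      _ ≤ 4 * (n * (i + 1)) := by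
          have h2L : 2 ^ L ≤ n * (i + 1) := by
            rw [hLdef]; exact Nat.pow_log_le_self 2 (by omega)
          omega
    have hss : s * s ≤ 4 * (n * (i + 1)) := by rw [hsdef]; exact Nat.sqrt_le _
    -- p * m * (K + 2) ≤ i
    have hpm6 : 6 ≤ p * m := by calc (6 : ℕ) = 2 * 3 := by norm_num
                                 _ ≤ p * m := Nat.mul_le_mul hp2 hm3
    have h12 : 12 ≤ p * m * n := by calc (12 : ℕ) = 6 * 2 := by norm_num
                                    _ ≤ p * m * n := Nat.mul_le_mul hpm6 hn2
    have hpmKi : p * m * (K + 2) ≤ i := by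
      have hKs : K + 2 ≤ s + 3 := by omega
      have hgoal : p * m * (s + 3) ≤ i := by
        by_cases hscase : s ≤ 16 * (p * m * n)
        · have hA : p * m * (s + 3) ≤ p * m * (16 * (p * m * n) + 3) :=
            Nat.mul_le_mul_left _ (by omega)
          have hB : p * m * (16 * (p * m * n) + 3) ≤ 256 * (p * m * n) ^ 2 := by
            have hYX : p * m ≤ p * m * n := Nat.le_mul_of_pos_right _ (by omega)
            have hsq : (p * m * n) ^ 2 = (p * m * n) * (p * m * n) := by ring
            nlinarith [hYX, h12, hsq, hpm6]
          omega
        · push_neg at hscase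
          have hs3 : 3 ≤ s := by omega
          have hup : 16 * (p * m * n) * s ≤ s * s :=
            Nat.mul_le_mul_right s (le_of_lt hscase)
          have hdn : 4 * (n * (i + 1)) ≤ 8 * (n * i) := by
            have h1 : n * (i + 1) ≤ n * (2 * i) := Nat.mul_le_mul_left _ (by omega)
            have h2 : n * (2 * i) = 2 * (n * i) := by ring
            omega
          have h8 : 8 * n * (2 * (p * m) * s) ≤ 8 * n * i := by
            have e1 : 8 * n * (2 * (p * m) * s) = 16 * (p * m * n) * s := by ring
            have e2 : 8 * n * i = 8 * (n * i) := by ring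
            omega
          have h2pms : 2 * (p * m) * s ≤ i :=
            Nat.le_of_mul_le_mul_left h8 (by omega)
          have e3 : p * m * (s + 3) = p * m * s + p * m * 3 := by ring
          have e4 : 2 * (p * m) * s = p * m * s + p * m * s := by ring
          have e5 : p * m * 3 ≤ p * m * s := Nat.mul_le_mul_left _ hs3
          omega
      calc p * m * (K + 2) ≤ p * m * (s + 3) := Nat.mul_le_mul_left _ hKs
      _ ≤ i := hgoal
    -- the pivot power x = p^kstar * j
    obtain ⟨q, hqdef⟩ : ∃ q, q = n * (i + 1) / j := ⟨_, rfl⟩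
    have hq1 : 1 ≤ q := by rw [hqdef]; exact (Nat.one_le_div_iff hj).mpr hjn
    obtain ⟨kstar, hkdef⟩ : ∃ k, k = Nat.log p q := ⟨_, rfl⟩
    obtain ⟨x, hxdef⟩ : ∃ x, x = p ^ kstar * j := ⟨_, rfl⟩
    have hx1 : x ≤ n * (i + 1) := by
      have h1 : p ^ kstar ≤ q := by
        rw [hkdef]; exact Nat.pow_log_le_self p (by omega)
      calc x = p ^ kstar * j := hxdef
      _ ≤ q * j := Nat.mul_le_mul_right _ h1
      _ ≤ n * (i + 1) := by
          rw [hqdef]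
          exact Nat.div_mul_le_self _ _
    have hx2 : n * (i + 1) < p * x := by
      have h1 : q < p ^ (kstar + 1) := by
        rw [hkdef]; exact Nat.lt_pow_succ_log_self (by omega) q
      have h2 : n * (i + 1) < (q + 1) * j := by
        have e1 : j * q + n * (i + 1) % j = n * (i + 1) := by
          rw [hqdef]; exact Nat.div_add_mod _ _
        have e2 : n * (i + 1) % j < j := Nat.mod_lt _ hj
        have e3 : (q + 1) * j = j * q + j := by ring
        omega
      calc n * (i + 1) < (q + 1) * j := h2
      _ ≤ p ^ (kstar + 1) * j := Nat.mul_le_mul_right _ (by omega)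
      _ = p * x := by rw [hxdef, pow_succ]; ring
    have hxpos : 1 ≤ x := by
      rw [hxdef]
      calc 1 = 1 * 1 := by norm_num
      _ ≤ p ^ kstar * j := Nat.mul_le_mul (Nat.one_le_pow _ _ (by omega)) hj
    -- x is large : x ≥ m*n*(K+2) + 1
    have hxK : m * n * (K + 2) < x := by
      have h1 : p * (m * n * (K + 2)) ≤ n * i := by
        calc p * (m * n * (K + 2)) = n * (p * m * (K + 2)) := by ring
        _ ≤ n * i := Nat.mul_le_mul_left _ hpmKi
      have h2 : n * i < p * x := by
        calc n * i ≤ n * (i + 1) := Nat.mul_le_mul_left _ (by omega)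
        _ < p * x := hx2
      exact lt_of_mul_lt_mul_left (lt_of_le_of_lt h1 h2) (by omega)
    -- the window of h's
    obtain ⟨h1, hh1def⟩ : ∃ h1, h1 = x / m := ⟨_, rfl⟩
    obtain ⟨h2, hh2def⟩ : ∃ h2, h2 = (x - 1) / n := ⟨_, rfl⟩
    have hmh1 : x ≤ m * (h1 + 1) := by
      have hd : m * h1 + x % m = x := by rw [hh1def]; exact Nat.div_add_mod x m
      have hmod : x % m < m := Nat.mod_lt _ (by omega)
      have e : m * (h1 + 1) = m * h1 + m := by ring
      omega
    have hnh2 : n * h2 ≤ x - 1 := by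
      rw [hh2def]
      exact Nat.mul_div_le _ _
    have hh2i : h2 ≤ i := by
      have hlt : h2 < i + 1 := by
        rw [hh2def, Nat.div_lt_iff_lt_mul (by omega : 0 < n)]
        have e : (i + 1) * n = n * (i + 1) := by ring
        omega
      omega
    have hwin : h1 + K ≤ h2 := by
      by_contra hcon
      push_neg at hcon
      -- h2 < h1 + K, i.e. h2 + 1 ≤ h1 + K
      have hf1 : m * h1 ≤ x := by
        rw [hh1def]; exact Nat.mul_div_le _ _
      have hd2 : n * h2 + (x - 1) % n = x - 1 := by
        rw [hh2def]; exact Nat.div_add_mod _ _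
      have hm2 : (x - 1) % n < n := Nat.mod_lt _ (by omega)
      have hf2 : x ≤ n * h2 + n := by omega
      have hf3 : m * x ≤ m * (n * h2) + m * n := by
        calc m * x ≤ m * (n * h2 + n) := Nat.mul_le_mul_left m hf2
        _ = m * (n * h2) + m * n := by ring
      have hf4 : m * (n * h2) + m * n ≤ m * n * h1 + m * n * K := by
        calc m * (n * h2) + m * n = m * n * (h2 + 1) := by ring
        _ ≤ m * n * (h1 + K) := Nat.mul_le_mul_left _ (by omega)
        _ = m * n * h1 + m * n * K := by ring
      have hf5 : m * n * h1 ≤ n * x := by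
        calc m * n * h1 = n * (m * h1) := by ring
        _ ≤ n * x := Nat.mul_le_mul_left n hf1
      have hg1 : (n + 1) * x ≤ m * x := Nat.mul_le_mul_right x (by omega)
      have hg2 : (n + 1) * x = n * x + x := by ring
      have hg3 : m * n * (K + 2) = m * n * K + 2 * (m * n) := by ring
      omega
    -- per-term bound
    have hterm : ∀ h ∈ Finset.range i,
        (if h ∈ Finset.Ico h1 h2 then (1 : ℤ) else 0) ≤ (sP p m h j : ℤ) - (sP p n h j : ℤ) := by
      intro h _
      split_ifs with hh
      · simp only [Finset.mem_Ico] at hh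
        have hna : n * (h + 1) < x := by
          have : n * (h + 1) ≤ n * h2 := Nat.mul_le_mul_left _ (by omega)
          omega
        have hma : x ≤ m * (h + 1) := by
          calc x ≤ m * (h1 + 1) := hmh1
          _ ≤ m * (h + 1) := Nat.mul_le_mul_left _ (by omega)
        have := sP_lt p m n h j kstar hp2 hj (le_of_lt hmn) (by rw [← hxdef]; exact hna)
          (by rw [← hxdef]; exact hma)
        have hc : (sP p n h j : ℤ) < (sP p m h j : ℤ) := by exact_mod_cast this
        omega
      · have := sP_mono p m n h j hp2 hj (le_of_lt hmn)
        have hc : (sP p n h j : ℤ) ≤ (sP p m h j : ℤ) := by exact_mod_cast this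
        omega
    -- put it together
    have hsubset : Finset.Ico h1 h2 ⊆ Finset.range i := by
      intro k hk
      simp only [Finset.mem_Ico] at hk
      simp only [Finset.mem_range]
      omega
    calc (K : ℤ) ≤ ((Finset.Ico h1 h2).card : ℤ) := by
          rw [Nat.card_Ico]
          exact_mod_cast (by omega : K ≤ h2 - h1)
    _ = ∑ h ∈ Finset.range i, (if h ∈ Finset.Ico h1 h2 then (1 : ℤ) else 0) := by
          rw [Finset.sum_ite_mem, Finset.inter_eq_right.mpr hsubset, Finset.sum_const,
            nsmul_eq_mul, mul_one]
    _ ≤ ∑ h ∈ Finset.range i, ((sP p m h j : ℤ) - (sP p n h j : ℤ)) :=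
          Finset.sum_le_sum hterm
end

section
/- Let p be a prime and let m > n > 1 be integers. If i₀ is a non-negative integer such that for every integer i ≥ i₀ and every positive integer j not divisible by p one has Σ_{h=0}^{i−1} (s_p(m,h,j) − s_p(n,h,j)) ≥ s_p(n,i,j), then i₀ ≥ ⌊(p−1)/m⌋. In particular, the least such i₀ = i₀(m,n,p) tends to infinity as the prime p tends to infinity. -/
theorem sP_eq_one {p m i j : ℕ} (hj : j ≤ m * (i + 1)) (hlt : m * (i + 1) < p * j) :
    sP p m i j = 1 := by
  have hj0 : 0 < j := Nat.pos_of_ne_zero fun h => by simp [h] at hlt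
  rw [sP, Finset.card_eq_one]
  refine ⟨0, Finset.eq_singleton_iff_unique_mem.mpr ⟨?_, fun k hk => ?_⟩⟩
  · simp only [Finset.mem_filter, Finset.mem_range, pow_zero, one_mul]
    exact ⟨by omega, hj⟩
  · by_contra hk0
    have hpk : p * j ≤ p ^ k * j :=
      Nat.mul_le_mul_right j (Nat.le_self_pow hk0 p)
    exact absurd (Finset.mem_filter.mp hk).2 (by omega)

theorem divisor_ii_general (p m n i₀ : ℕ) (hmn : m > n) (hn : n > 1)
    (h : ∀ i : ℕ, i ≥ i₀ → ∀ j : ℕ, 0 < j → ¬ p ∣ j →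
      (sP p n i j : ℤ) ≤
        ∑ h ∈ Finset.range i, ((sP p m h j : ℤ) - (sP p n h j : ℤ))) :
    i₀ ≥ (p - 1) / m := by
  by_contra! hlt
  have hm : 0 < m := by omega
  have hpos : 0 < m * (i₀ + 1) := Nat.mul_pos hm i₀.succ_pos
  have hbound : m * (i₀ + 1) < p := by
    have : (i₀ + 1) * m ≤ p - 1 := (Nat.le_div_iff_mul_le hm).mp hlt
    rw [mul_comm] at this
    omega
  have sP_one : ∀ k ≤ m, 0 < k → ∀ i ≤ i₀, sP p k i 1 = 1 := fun k hkm hk i hi =>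
    sP_eq_one (Nat.mul_pos hk i.succ_pos) <|
      calc k * (i + 1) ≤ m * (i₀ + 1) := Nat.mul_le_mul hkm (by omega)
        _ < p * 1 := by omega
  have hp1 : ¬ p ∣ 1 := by
    rw [Nat.dvd_one]
    omega
  have key := h i₀ le_rfl 1 one_pos hp1
  have hsum : ∑ i ∈ Finset.range i₀, ((sP p m i 1 : ℤ) - (sP p n i 1 : ℤ)) = 0 :=
    Finset.sum_eq_zero fun i hi => by
      have hi : i ≤ i₀ := (Finset.mem_range.mp hi).le
      rw [sP_one m le_rfl hm i hi, sP_one n hmn.le (by omega) i hi, sub_self]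
  rw [hsum, sP_one n hmn.le (by omega) i₀ le_rfl] at key
  norm_num at key

/-- Theorem (divisor)(ii), arithmetic form: any `i₀` for which the valuation inequality holds
for all `i ≥ i₀` and all positive `j` prime to `p` must satisfy `i₀ ≥ ⌊(p−1)/m⌋`. -/
theorem divisor_ii (p m n i₀ : ℕ) (hp : p.Prime) (hmn : m > n) (hn : n > 1)
    (h : ∀ i : ℕ, i ≥ i₀ → ∀ j : ℕ, 0 < j → ¬ p ∣ j →
      (sP p n i j : ℤ) ≤
        ∑ h ∈ Finset.range i, ((sP p m h j : ℤ) - (sP p n h j : ℤ))) :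
    i₀ ≥ (p - 1) / m :=
  divisor_ii_general p m n i₀ hmn hn h
end

section
/- Let p be a prime, let m > n ≥ 1 and i ≥ 0 be integers, and let j be a positive integer not divisible by p. Set t = s_p(n,i,j). If (m−n)·(p^t−1)·j ≥ 2t·m·n·(p−1), then Σ_{h=0}^{i−1} (s_p(m,h,j) − s_p(n,h,j)) ≥ s_p(n,i,j). -/
private theorem sP_inner_bound (m n i a : ℕ) (hmn : m > n) (hn0 : 0 < n) (ha1 : 1 ≤ a)
    (hai : a ≤ n * (i+1)) :
    (((a-1)/n : ℕ) : ℤ) - (((a-1)/m : ℕ) : ℤ) ≤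
      ∑ h ∈ Finset.range i, (if n * (h+1) < a ∧ a ≤ m * (h+1) then (1:ℤ) else 0) := by
  have hm0 : 0 < m := lt_of_le_of_lt (Nat.zero_le n) hmn
  set c := (a-1)/n with hc
  set d := (a-1)/m with hd
  have hdc : d ≤ c := Nat.div_le_div_left (le_of_lt hmn) hn0
  have hcard : ∑ h ∈ Finset.range i, (if n * (h+1) < a ∧ a ≤ m * (h+1) then (1:ℤ) else 0)
      = (((Finset.range i).filter (fun h => n * (h+1) < a ∧ a ≤ m * (h+1))).card : ℤ) := by
    rw [Finset.card_filter]; push_cast; rfl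
  rw [hcard]
  rcases Nat.eq_zero_or_pos c with hc0 | hc1
  · have : d = 0 := le_antisymm (hc0 ▸ hdc) (Nat.zero_le d)
    simp [hc0, this]
  · have hci : c ≤ i := by
      have : (a-1)/n < i + 1 := by
        rw [Nat.div_lt_iff_lt_mul hn0]
        calc a - 1 < a := by omega
          _ ≤ n * (i+1) := hai
          _ = (i+1) * n := Nat.mul_comm _ _
      omega
    have hsub : Finset.Icc d (c-1) ⊆
        (Finset.range i).filter (fun h => n * (h+1) < a ∧ a ≤ m * (h+1)) := by
      intro x hx
      rw [Finset.mem_Icc] at hx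
      rw [Finset.mem_filter, Finset.mem_range]
      refine ⟨by omega, ?_, ?_⟩
      · have hx1 : x + 1 ≤ c := by omega
        have h1 : (x+1) * n ≤ a - 1 := (Nat.le_div_iff_mul_le hn0).mp hx1
        have h1' : n * (x+1) ≤ a - 1 := by rw [Nat.mul_comm]; exact h1
        omega
      · have hx2 : d < x + 1 := by omega
        have h2 : a - 1 < (x+1) * m := (Nat.div_lt_iff_lt_mul hm0).mp hx2
        have h2' : a - 1 < m * (x+1) := by rw [Nat.mul_comm]; exact h2
        omega
    have hcardIcc : (Finset.Icc d (c-1)).card = c - d := by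
      rw [Nat.card_Icc]; omega
    have hle := Finset.card_le_card hsub
    rw [hcardIcc] at hle
    have hle' : ((c - d : ℕ) : ℤ) ≤ _ := Int.ofNat_le.mpr hle
    push_cast [Nat.cast_sub hdc] at hle'
    exact_mod_cast hle'

private theorem sP_arith (p m n t j : ℕ) (c d : ℕ → ℕ) (hp2 : 2 ≤ p) (hmn : m > n) (hn0 : 0 < n)
    (hcd : ∀ k, k < t → (p^k * j : ℤ) * ((m:ℤ) - n) - (m:ℤ)*n ≤ ((m:ℤ)*n) * ((c k : ℤ) - d k))
    (hh : ((m:ℤ) - n) * ((p:ℤ)^t - 1) * j ≥ 2*t*(m:ℤ)*n*((p:ℤ)-1)) :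
    (t:ℤ) ≤ ∑ k ∈ Finset.range t, ((c k : ℤ) - (d k : ℤ)) := by
  have hm0 : (0:ℤ) < m := by exact_mod_cast lt_of_le_of_lt (Nat.zero_le n) hmn
  have hn0' : (0:ℤ) < n := by exact_mod_cast hn0
  set G : ℤ := ∑ k ∈ Finset.range t, (p:ℤ)^k with hG
  have hgeom : G * ((p:ℤ) - 1) = (p:ℤ)^t - 1 := geom_sum_mul _ _
  have hp1 : (0:ℤ) < (p:ℤ) - 1 := by
    have : (2:ℤ) ≤ p := by exact_mod_cast hp2
    linarith
  have hGj : 2*(t:ℤ)*m*n ≤ ((m:ℤ) - n) * G * j := by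
    have h1 : (2*(t:ℤ)*m*n) * ((p:ℤ)-1) ≤ (((m:ℤ) - n) * G * j) * ((p:ℤ)-1) := by
      calc (2*(t:ℤ)*m*n) * ((p:ℤ)-1) = 2*t*(m:ℤ)*n*((p:ℤ)-1) := by ring
        _ ≤ ((m:ℤ) - n) * ((p:ℤ)^t - 1) * j := hh
        _ = (((m:ℤ) - n) * G * j) * ((p:ℤ)-1) := by rw [← hgeom]; ring
    exact le_of_mul_le_mul_right h1 hp1
  have hsum : ∑ k ∈ Finset.range t, ((p^k * j : ℤ) * ((m:ℤ) - n) - (m:ℤ)*n)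
      = ((m:ℤ) - n) * G * j - t * (m*n) := by
    rw [Finset.sum_sub_distrib, Finset.sum_const, Finset.card_range, hG, Finset.mul_sum,
      Finset.sum_mul, nsmul_eq_mul]
    congr 1
    apply Finset.sum_congr rfl; intro k _; ring
  have hmain : ((m:ℤ)*n) * (t:ℤ) ≤ ((m:ℤ)*n) * ∑ k ∈ Finset.range t, ((c k : ℤ) - (d k : ℤ)) := by
    rw [Finset.mul_sum]
    calc ((m:ℤ)*n) * (t:ℤ)
        = ((m:ℤ) - n) * G * j - t * (m*n) + (t * (m*n) - ((m:ℤ) - n) * G * j) + ((m:ℤ)*n) * t := by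
          ring
      _ ≤ ((m:ℤ) - n) * G * j - t * (m*n) := by nlinarith
      _ = ∑ k ∈ Finset.range t, ((p^k * j : ℤ) * ((m:ℤ) - n) - (m:ℤ)*n) := hsum.symm
      _ ≤ ∑ k ∈ Finset.range t, ((m:ℤ)*n) * ((c k : ℤ) - (d k : ℤ)) :=
          Finset.sum_le_sum (fun k hk => hcd k (Finset.mem_range.mp hk))
  exact le_of_mul_le_mul_left hmain (by positivity)

/-- Lemma (exponential), with `t = s_p(n,i,j)` and denominators cleared:
if `(m−n)·(p^t−1)·j ≥ 2t·m·n·(p−1)`, then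
`Σ_{h=0}^{i−1}(s_p(m,h,j) − s_p(n,h,j)) ≥ s_p(n,i,j)`. -/
theorem exponential (p m n i j : ℕ) (hp : p.Prime) (hmn : m > n) (hn : 1 ≤ n)
    (hj : 0 < j) (hpj : ¬ p ∣ j)
    (h : (m - n) * (p ^ (sP p n i j) - 1) * j ≥ 2 * (sP p n i j) * m * n * (p - 1)) :
    (sP p n i j : ℤ) ≤
      ∑ h ∈ Finset.range i, ((sP p m h j : ℤ) - (sP p n h j : ℤ)) := by
  have hp2 : 2 ≤ p := hp.two_le
  have hm0 : 0 < m := lt_of_le_of_lt (Nat.zero_le n) hmn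
  have hn0 : 0 < n := hn
  set t := sP p n i j with ht
  set B := m * (i + 1) with hB
  -- the filter range can be enlarged
  have hklt : ∀ (M k : ℕ), p ^ k * j ≤ M → k < M := by
    intro M k hk
    calc k < 2 ^ k := Nat.lt_two_pow_self (n := k)
      _ ≤ p ^ k := Nat.pow_le_pow_left hp2 k
      _ ≤ p ^ k * j := Nat.le_mul_of_pos_right _ hj
      _ ≤ M := hk
  have hsP : ∀ m' i', m' * (i' + 1) ≤ B →
      sP p m' i' j = ((Finset.range B).filter (fun k => p ^ k * j ≤ m' * (i' + 1))).card := by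
    intro m' i' hle
    unfold sP
    congr 1
    apply Finset.ext
    intro k
    simp only [Finset.mem_filter, Finset.mem_range]
    constructor
    · rintro ⟨hk, hc⟩; exact ⟨lt_of_lt_of_le hk hle, hc⟩
    · rintro ⟨_, hc⟩; exact ⟨hklt _ _ hc, hc⟩
  -- for k < t we have p^k*j ≤ n*(i+1)
  have hak : ∀ k, k < t → p ^ k * j ≤ n * (i + 1) := by
    intro k hk
    by_contra hc
    push_neg at hc
    have hsub : ((Finset.range (n * (i+1))).filter (fun k' => p ^ k' * j ≤ n * (i + 1)))
        ⊆ Finset.range k := by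
      intro k' hk'
      simp only [Finset.mem_filter, Finset.mem_range] at hk' ⊢
      have h1 : p ^ k' * j < p ^ k * j := lt_of_le_of_lt hk'.2 hc
      have h2 : p ^ k' < p ^ k := lt_of_mul_lt_mul_right h1 (Nat.zero_le j)
      exact (Nat.pow_lt_pow_iff_right hp2).mp h2
    have hcard := Finset.card_le_card hsub
    rw [Finset.card_range] at hcard
    have : t ≤ k := by rw [ht]; unfold sP; exact hcard
    omega
  have htB : t ≤ B := by
    have h1 : t ≤ n * (i+1) := by
      rw [ht]; unfold sP
      exact le_trans (Finset.card_filter_le _ _) (le_of_eq (Finset.card_range _))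
    exact le_trans h1 (Nat.mul_le_mul_right _ (le_of_lt hmn))
  -- double counting
  have hswap : ∑ h ∈ Finset.range i, ((sP p m h j : ℤ) - (sP p n h j : ℤ))
      = ∑ k ∈ Finset.range B, ∑ h ∈ Finset.range i,
          (if n * (h+1) < p ^ k * j ∧ p ^ k * j ≤ m * (h+1) then (1:ℤ) else 0) := by
    rw [Finset.sum_comm]
    apply Finset.sum_congr rfl
    intro h hh
    have hhi : h < i := Finset.mem_range.mp hh
    have hm' : m * (h + 1) ≤ B := Nat.mul_le_mul_left _ (by omega)
    have hn' : n * (h + 1) ≤ B := le_trans (Nat.mul_le_mul (le_of_lt hmn) (by omega)) le_rfl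
    rw [hsP m h hm', hsP n h hn', Finset.card_filter, Finset.card_filter]
    push_cast
    rw [← Finset.sum_sub_distrib]
    apply Finset.sum_congr rfl
    intro k _
    have himp : p ^ k * j ≤ n * (h+1) → p ^ k * j ≤ m * (h+1) :=
      fun hle => le_trans hle (Nat.mul_le_mul_right _ (le_of_lt hmn))
    by_cases h1 : p ^ k * j ≤ n * (h+1) <;> by_cases h2 : p ^ k * j ≤ m * (h+1) <;>
      simp_all [Nat.not_lt.mpr, Nat.lt_of_not_le]
  rw [hswap]
  -- restrict to k < t
  have hrestrict : ∑ k ∈ Finset.range t, ∑ h ∈ Finset.range i,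
        (if n * (h+1) < p ^ k * j ∧ p ^ k * j ≤ m * (h+1) then (1:ℤ) else 0)
      ≤ ∑ k ∈ Finset.range B, ∑ h ∈ Finset.range i,
        (if n * (h+1) < p ^ k * j ∧ p ^ k * j ≤ m * (h+1) then (1:ℤ) else 0) := by
    apply Finset.sum_le_sum_of_subset_of_nonneg (Finset.range_subset_range.mpr htB)
    intro k _ _
    apply Finset.sum_nonneg
    intro x _
    split <;> norm_num
  refine le_trans ?_ hrestrict
  -- per-k bound via c, d
  set c : ℕ → ℕ := fun k => (p ^ k * j - 1) / n with hcdef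
  set d : ℕ → ℕ := fun k => (p ^ k * j - 1) / m with hddef
  have ha1 : ∀ k, 1 ≤ p ^ k * j := fun k => Nat.mul_pos (pow_pos (by omega) k) hj
  have hinner : ∀ k, k < t →
      ((c k : ℤ) - (d k : ℤ)) ≤ ∑ h ∈ Finset.range i,
        (if n * (h+1) < p ^ k * j ∧ p ^ k * j ≤ m * (h+1) then (1:ℤ) else 0) := fun k hk =>
    sP_inner_bound m n i (p ^ k * j) hmn hn0 (ha1 k) (hak k hk)
  have hcd : ∀ k, k < t →
      (p^k * j : ℤ) * ((m:ℤ) - n) - (m:ℤ)*n ≤ ((m:ℤ)*n) * ((c k : ℤ) - d k) := by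
    intro k hk
    have ha := ha1 k
    have h1 : p ^ k * j - 1 < (c k + 1) * n := by
      rw [← Nat.div_lt_iff_lt_mul hn0]
      simp [hcdef]
    have h2 : d k * m ≤ p ^ k * j - 1 := Nat.div_mul_le_self _ _
    zify [ha] at h1 h2
    have hm0' : (0:ℤ) ≤ m := by positivity
    have hn0' : (0:ℤ) ≤ n := by positivity
    have h1a : ((p:ℤ)^k * j) ≤ (n:ℤ) * (c k) + n := by linarith
    have h2a : ((d k : ℤ) * m) ≤ ((p:ℤ)^k * j) := by linarith
    have h1' := mul_le_mul_of_nonneg_right h1a hm0'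
    have h2' := mul_le_mul_of_nonneg_right h2a hn0'
    ring_nf at h1' h2' ⊢
    linarith
  have hpt1 : 1 ≤ p ^ t := Nat.one_le_pow _ _ (by omega)
  have hh' : ((m:ℤ) - n) * ((p:ℤ)^t - 1) * j ≥ 2*t*(m:ℤ)*n*((p:ℤ)-1) := by
    zify [le_of_lt hmn, hpt1, (by omega : 1 ≤ p)] at h
    push_cast at h ⊢
    linarith
  calc (t:ℤ) ≤ ∑ k ∈ Finset.range t, ((c k : ℤ) - (d k : ℤ)) :=
        sP_arith p m n t j c d hp2 hmn hn0 hcd hh'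
    _ ≤ ∑ k ∈ Finset.range t, ∑ h ∈ Finset.range i,
          (if n * (h+1) < p ^ k * j ∧ p ^ k * j ≤ m * (h+1) then (1:ℤ) else 0) :=
        Finset.sum_le_sum (fun k hk => hinner k (Finset.mem_range.mp hk))
end

section
/- Let p be a prime, let m > n ≥ 1 and i ≥ 1 be integers, and let j be a positive integer not divisible by p. Suppose that (m−n)·i ≥ n and that Σ_{h=0}^{i−2} (s_p(m,h,j) − s_p(n,h,j)) ≥ s_p(n,i−1,j). Then Σ_{h=0}^{i−1} (s_p(m,h,j) − s_p(n,h,j)) ≥ s_p(n,i,j). -/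
lemma sP_le_sP_of_mul_le {p m n i i' j : ℕ} (h : n * (i + 1) ≤ m * (i' + 1)) :
    sP p n i j ≤ sP p m i' j := by
  apply Finset.card_le_card
  intro k hk
  simp only [Finset.mem_filter, Finset.mem_range] at hk ⊢
  exact ⟨hk.1.trans_le h, hk.2.trans h⟩

lemma mul_succ_le_of_le_tsub_mul {m n i : ℕ} (h : n ≤ (m - n) * i) : n * (i + 1) ≤ m * i := by
  rcases le_total n m with hnm | hmn
  · calc n * (i + 1) = n * i + n := by ring
      _ ≤ n * i + (m - n) * i := by gcongr
      _ = m * i := by rw [← add_mul, Nat.add_sub_cancel' hnm]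
  · rw [Nat.sub_eq_zero_of_le hmn, zero_mul, Nat.le_zero] at h
    simp [h]

theorem stayszero_general (p m n i j : ℕ) (hi : 1 ≤ i) (hin : (m - n) * i ≥ n)
    (hprev : (sP p n (i - 1) j : ℤ) ≤
      ∑ h ∈ Finset.range (i - 1), ((sP p m h j : ℤ) - (sP p n h j : ℤ))) :
    (sP p n i j : ℤ) ≤
      ∑ h ∈ Finset.range i, ((sP p m h j : ℤ) - (sP p n h j : ℤ)) := by
  obtain ⟨i, rfl⟩ : ∃ i', i = i' + 1 := ⟨i - 1, (Nat.succ_pred_eq_of_pos hi).symm⟩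
  rw [Nat.add_sub_cancel] at hprev
  have hlast : sP p n (i + 1) j ≤ sP p m i j :=
    sP_le_sP_of_mul_le (mul_succ_le_of_le_tsub_mul hin)
  rw [Finset.sum_range_succ]
  omega

/-- Lemma (stayszero): if `(m−n)·i ≥ n` (i.e. `i ≥ n/(m−n)`) and the valuation inequality
holds at `i−1`, then it also holds at `i`. -/
theorem stayszero (p m n i j : ℕ) (hp : p.Prime) (hmn : m > n) (hn : 1 ≤ n) (hi : 1 ≤ i)
    (hj : 0 < j) (hpj : ¬ p ∣ j) (hin : (m - n) * i ≥ n)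
    (hprev : (sP p n (i - 1) j : ℤ) ≤
      ∑ h ∈ Finset.range (i - 1), ((sP p m h j : ℤ) - (sP p n h j : ℤ))) :
    (sP p n i j : ℤ) ≤
      ∑ h ∈ Finset.range i, ((sP p m h j : ℤ) - (sP p n h j : ℤ)) :=
  stayszero_general p m n i j hi hin hprev
end

section
/- Let p be a prime and let A be a commutative ring in which p = 0. Suppose there exist elements a₁,…,a_N ∈ A such that the smallest subring of A containing all p-th powers {a^p : a ∈ A} together with a₁,…,a_N is A itself. Then for every integer q > N, the q-th exterior power over A of the module of Kähler differentials Ω_{A/𝔽_p} is the zero module. -/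
open Submodule Set

/-!
Since `d(x ^ p) = p • x ^ (p - 1) • dx = 0`, the Leibniz rule shows that `dx` lies in the
`A`-span of the `d aᵢ` for every `x` in the subring generated by the `p`-th powers and the `aᵢ`,
i.e. for every `x`. So `Ω[A⁄ℤ]` is generated by `N` elements, and the `q`-fold wedge products of
any `N` generators vanish for `q > N`.
-/
lemma exteriorPower.subsingleton_of_span_eq_top {R M ι : Type*} [CommRing R] [AddCommGroup M]
    [Module R M] [LinearOrder ι] [Fintype ι] {v : ι → M} (hv : span R (range v) = ⊤) {n : ℕ}
    (hn : Fintype.card ι < n) : Subsingleton (⋀[R]^n M) := by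
  have : IsEmpty (Set.powersetCard ι n) :=
    ⟨fun s => (s.1.card_le_univ.trans_lt hn).ne (Set.powersetCard.card_eq s)⟩
  have hbot := exteriorPower.ιMulti_family_span_of_span R (n := n) hv
  rw [range_eq_empty, span_empty] at hbot
  exact (Submodule.subsingleton_iff R).mp (subsingleton_of_bot_eq_top hbot)

lemma Derivation.map_pow_char_eq_zero {R A M : Type*} [CommSemiring R] [CommSemiring A]
    [Algebra R A] [AddCommMonoid M] [Module A M] [Module R M] [IsScalarTower R A M]
    (D : Derivation R A M) (p : ℕ) [CharP A p] (x : A) : D (x ^ p) = 0 := by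
  rw [D.leibniz_pow, ← Nat.cast_smul_eq_nsmul A, CharP.cast_eq_zero, zero_smul]

lemma Derivation.map_mem_span_image_of_mem_closure {A M : Type*} [CommRing A] [AddCommGroup M]
    [Module A M] (D : Derivation ℤ A M) {t : Set A} {x : A} (hx : x ∈ Subring.closure t) :
    D x ∈ span A (D '' t) := by
  induction hx using Subring.closure_induction with
  | mem y hy => exact subset_span (mem_image_of_mem D hy)
  | one => simpa only [D.map_one_eq_zero] using zero_mem _
  | zero => simpa only [map_zero] using zero_mem _
  | add y z _ _ hy hz => simpa only [map_add] using add_mem hy hz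
  | neg y _ hy => simpa only [map_neg] using neg_mem hy
  | mul y z _ _ hy hz =>
    simpa only [D.leibniz] using add_mem (smul_mem _ y hz) (smul_mem _ z hy)

lemma KaehlerDifferential.span_D_image_eq_top_of_closure_pow_union_eq_top {A : Type*} [CommRing A]
    (p : ℕ) [CharP A p] {s : Set A} (hs : Subring.closure (range (· ^ p) ∪ s) = ⊤) :
    span A (KaehlerDifferential.D ℤ A '' s) = ⊤ := by
  set D := KaehlerDifferential.D ℤ A
  rw [eq_top_iff, ← span_range_derivation, span_le]
  rintro _ ⟨x, rfl⟩
  refine span_le.mpr ?_ (D.map_mem_span_image_of_mem_closure (hs ▸ Subring.mem_top x))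
  rw [image_union, union_subset_iff]
  refine ⟨?_, subset_span⟩
  rintro _ ⟨_, ⟨y, rfl⟩, rfl⟩
  simpa only [SetLike.mem_coe, D.map_pow_char_eq_zero p] using zero_mem _

theorem exteriorPower_kaehlerDifferential_subsingleton_general
    (p : ℕ) (A : Type*) [CommRing A] [CharP A p]
    (N : ℕ) (a : Fin N → A)
    (hgen : Subring.closure ((Set.range fun x : A => x ^ p) ∪ Set.range a) = ⊤)
    (q : ℕ) (hq : q > N) :
    Subsingleton (⋀[A]^q (Ω[A⁄ℤ])) := by
  have hspan : span A (range (KaehlerDifferential.D ℤ A ∘ a)) = ⊤ := by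
    rw [range_comp]
    exact KaehlerDifferential.span_D_image_eq_top_of_closure_pow_union_eq_top p hgen
  exact exteriorPower.subsingleton_of_span_eq_top hspan (by simpa using hq)

/-- Lemma (derhamwittzero), de Rham part: if `A` is a commutative ring of characteristic `p`
which is generated as an algebra over the subring of `p`-th powers by `N` elements, then the
`q`-th exterior power of the module of Kähler differentials of `A` vanishes for `q > N`. -/
theorem exteriorPower_kaehlerDifferential_subsingleton
    (p : ℕ) (hp : p.Prime) (A : Type*) [CommRing A] [CharP A p]
    (N : ℕ) (a : Fin N → A)
    (hgen : Subring.closure ((Set.range fun x : A => x ^ p) ∪ Set.range a) = ⊤)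
    (q : ℕ) (hq : q > N) :
    Subsingleton (⋀[A]^q (Ω[A⁄ℤ])) :=
  exteriorPower_kaehlerDifferential_subsingleton_general p A N a hgen q hq
end

section
/- Let p be a prime, let m ≥ 1, h ≥ 0 and u ≥ 1 be integers, and let j be a positive integer not divisible by p such that m(h+1) < p^u·j. Then the number of integers r with 1 ≤ r ≤ u and ⌊(p^{u−1}j − 1)/m⌋ < p^{r−1}(h+1) equals s_p(m,h,j). -/
/-- If `m(h+1) < p^u·j`, then the number of `r` with `1 ≤ r ≤ u` and
`⌊(p^{u−1}j − 1)/m⌋ < p^{r−1}(h+1)` equals `s_p(m,h,j)`. -/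
theorem card_filter_eq_sP (p m h u j : ℕ) (hp : p.Prime) (hm : 1 ≤ m) (hu : 1 ≤ u)
    (hj : 0 < j) (hpj : ¬ p ∣ j) (hbound : m * (h + 1) < p ^ u * j) :
    ((Finset.Icc 1 u).filter
        (fun r => (p ^ (u - 1) * j - 1) / m < p ^ (r - 1) * (h + 1))).card =
      sP p m h j := by
  have hp1 : 1 < p := hp.one_lt
  have hm0 : 0 < m := hm
  -- any k in the sP condition satisfies k < u
  have hklt : ∀ k, p ^ k * j ≤ m * (h + 1) → k < u := by
    intro k hk
    by_contra hc
    push_neg at hc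
    have : p ^ u * j ≤ p ^ k * j :=
      Nat.mul_le_mul_right j (Nat.pow_le_pow_right hp.pos hc)
    omega
  -- key equivalence of the filter conditions under r ↦ u - r
  have hiff : ∀ r, 1 ≤ r → r ≤ u →
      ((p ^ (u - 1) * j - 1) / m < p ^ (r - 1) * (h + 1) ↔
        p ^ (u - r) * j ≤ m * (h + 1)) := by
    intro r hr1 hru
    rw [Nat.div_lt_iff_lt_mul hm0]
    have hpos : 1 ≤ p ^ (u - 1) * j :=
      Nat.one_le_iff_ne_zero.mpr (by positivity)
    have hsplit : u - 1 = (u - r) + (r - 1) := by omega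
    have hppos : 0 < p ^ (r - 1) := Nat.pow_pos hp.pos
    constructor
    · intro hx
      have h1 : p ^ (u - 1) * j ≤ p ^ (r - 1) * (h + 1) * m := by omega
      rw [hsplit, pow_add] at h1
      have h2 : p ^ (r - 1) * (p ^ (u - r) * j) ≤ p ^ (r - 1) * (m * (h + 1)) := by
        calc p ^ (r - 1) * (p ^ (u - r) * j) = p ^ (u - r) * p ^ (r - 1) * j := by ring
        _ ≤ p ^ (r - 1) * (h + 1) * m := h1
        _ = p ^ (r - 1) * (m * (h + 1)) := by ring
      exact Nat.le_of_mul_le_mul_left h2 hppos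
    · intro hx
      have h2 : p ^ (r - 1) * (p ^ (u - r) * j) ≤ p ^ (r - 1) * (m * (h + 1)) :=
        Nat.mul_le_mul_left _ hx
      have h1 : p ^ (u - 1) * j ≤ p ^ (r - 1) * (h + 1) * m := by
        calc p ^ (u - 1) * j = p ^ (r - 1) * (p ^ (u - r) * j) := by
              rw [hsplit, pow_add]; ring
        _ ≤ p ^ (r - 1) * (m * (h + 1)) := h2
        _ = p ^ (r - 1) * (h + 1) * m := by ring
      omega
  -- rewrite sP as a filter over range u
  have hsPeq : sP p m h j =
      ((Finset.range u).filter (fun k => p ^ k * j ≤ m * (h + 1))).card := by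
    unfold sP
    congr 1
    apply Finset.ext
    intro k
    simp only [Finset.mem_filter, Finset.mem_range]
    constructor
    · rintro ⟨-, hc⟩; exact ⟨hklt k hc, hc⟩
    · rintro ⟨-, hc⟩
      refine ⟨?_, hc⟩
      have hkp : k < p ^ k := Nat.lt_pow_self hp1
      have : p ^ k ≤ p ^ k * j := Nat.le_mul_of_pos_right _ hj
      omega
  rw [hsPeq]
  apply Finset.card_bij (fun r _ => u - r)
  · intro r hr
    simp only [Finset.mem_filter, Finset.mem_Icc] at hr
    simp only [Finset.mem_filter, Finset.mem_range]
    obtain ⟨⟨hr1, hru⟩, hcond⟩ := hr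
    exact ⟨by omega, (hiff r hr1 hru).mp hcond⟩
  · intro r₁ hr₁ r₂ hr₂ hEq
    simp only [Finset.mem_filter, Finset.mem_Icc] at hr₁ hr₂
    omega
  · intro k hk
    simp only [Finset.mem_filter, Finset.mem_range] at hk
    obtain ⟨hku, hc⟩ := hk
    refine ⟨u - k, ?_, by omega⟩
    simp only [Finset.mem_filter, Finset.mem_Icc]
    refine ⟨⟨by omega, by omega⟩, ?_⟩
    rw [hiff (u - k) (by omega) (by omega)]
    have : u - (u - k) = k := by omega
    rw [this]; exact hc
end

section
/- Let p be a prime, let m > n ≥ 1, i ≥ 0 and u ≥ 1 be integers, and let j be a positive integer not divisible by p such that m(i+1) < p^u·j. Set d = ⌊(p^{u−1}j − 1)/m⌋ and e = ⌊(p^{u−1}j − 1)/n⌋. Then Σ_{r=1}^{u} #{k : 1 ≤ k ≤ i and d < p^{r−1}·k ≤ e} = Σ_{h=0}^{i−1} (s_p(m,h,j) − s_p(n,h,j)). -/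
private theorem DCV.divdiv (q x b : ℕ) (hq : 0 < q) (hx : 0 < x) (hb : 0 < b) :
    (q * b - 1) / (q * x) = (b - 1) / x := by
  set c := (b - 1) / x with hc
  set s := (b - 1) % x with hs
  have hdm : x * c + s = b - 1 := Nat.div_add_mod (b - 1) x
  have hlt : s < x := Nat.mod_lt (b - 1) hx
  have hb' : b = x * c + s + 1 := by omega
  have e1 : q * b = c * (q * x) + q * (s + 1) := by rw [hb']; ring
  have e2 : 1 ≤ q * (s + 1) := Nat.one_le_iff_ne_zero.2 (by positivity)
  have e3 : q * (s + 1) ≤ q * x := Nat.mul_le_mul_left q (by omega)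
  apply Nat.div_eq_of_lt_le
  · omega
  · have : (c + 1) * (q * x) = c * (q * x) + q * x := by ring
    omega

/-- `sP` counts only exponents below `u` when `x*(h+1) < p^u*j`. -/
private theorem DCV.sP_eq {p j : ℕ} (hp : 2 ≤ p) (hj : 0 < j) (x h u : ℕ)
    (hb : x * (h + 1) < p ^ u * j) :
    sP p x h j = ((Finset.range u).filter (fun t => p ^ t * j ≤ x * (h + 1))).card := by
  unfold sP
  congr 1
  ext t
  simp only [Finset.mem_filter, Finset.mem_range]
  constructor
  · rintro ⟨_, h2⟩
    refine ⟨?_, h2⟩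
    have h3 : p ^ t * j < p ^ u * j := lt_of_le_of_lt h2 hb
    have h4 : p ^ t < p ^ u := lt_of_mul_lt_mul_right h3 (Nat.zero_le j)
    exact (Nat.pow_lt_pow_iff_right hp).1 h4
  · rintro ⟨_, h2⟩
    refine ⟨?_, h2⟩
    have h3 : t < 2 ^ t := Nat.lt_two_pow_self
    have h4 : 2 ^ t ≤ p ^ t := Nat.pow_le_pow_left hp t
    have h5 : p ^ t ≤ p ^ t * j := Nat.le_mul_of_pos_right _ hj
    omega

/-- counting `h < i` with `P ≤ x*(h+1)` -/
private theorem DCV.count_h (x P i : ℕ) (hx : 0 < x) (hP : 0 < P) :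
    ((Finset.range i).filter (fun h => P ≤ x * (h + 1))).card
      = i - min ((P - 1) / x) i := by
  have hcond : ∀ h, P ≤ x * (h + 1) ↔ (P - 1) / x ≤ h := by
    intro h
    have h1 : (P - 1) / x < h + 1 ↔ P - 1 < (h + 1) * x := Nat.div_lt_iff_lt_mul hx
    have h2 : (h + 1) * x = x * (h + 1) := mul_comm _ _
    omega
  have : (Finset.range i).filter (fun h => P ≤ x * (h + 1))
      = Finset.Ico (min ((P - 1) / x) i) i := by
    ext h
    simp only [Finset.mem_filter, Finset.mem_range, Finset.mem_Ico, hcond]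
    omega
  rw [this, Nat.card_Ico]

/-- counting `k ∈ [1,i]` with `a < k ≤ b` -/
private theorem DCV.count_k (i a b : ℕ) :
    ((Finset.Icc 1 i).filter (fun k => a < k ∧ k ≤ b)).card = min i b - min i a := by
  have : (Finset.Icc 1 i).filter (fun k => a < k ∧ k ≤ b)
      = Finset.Ioc (min a i) (min b i) := by
    ext k
    simp only [Finset.mem_filter, Finset.mem_Icc, Finset.mem_Ioc]
    omega
  rw [this, Nat.card_Ioc]
  omega

/-- With `d = ⌊(p^{u−1}j − 1)/m⌋` and `e = ⌊(p^{u−1}j − 1)/n⌋`, the double count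
`Σ_{r=1}^{u} #{k : 1 ≤ k ≤ i, d < p^{r−1}k ≤ e}` equals
`Σ_{h=0}^{i−1}(s_p(m,h,j) − s_p(n,h,j))`. -/
theorem double_count_eq_valuation (p m n i u j : ℕ) (hp : p.Prime) (hmn : m > n) (hn : 1 ≤ n)
    (hu : 1 ≤ u) (hj : 0 < j) (hpj : ¬ p ∣ j) (hbound : m * (i + 1) < p ^ u * j) :
    ((∑ r ∈ Finset.Icc 1 u,
        ((Finset.Icc 1 i).filter
          (fun k => (p ^ (u - 1) * j - 1) / m < p ^ (r - 1) * k ∧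
            p ^ (r - 1) * k ≤ (p ^ (u - 1) * j - 1) / n)).card : ℕ) : ℤ) =
      ∑ h ∈ Finset.range i, ((sP p m h j : ℤ) - (sP p n h j : ℤ)) := by
  have hp2 : 2 ≤ p := hp.two_le
  have hm : 0 < m := lt_trans hn hmn
  set A : ℕ → ℕ → ℕ := fun x t => (p ^ t * j - 1) / x with hA
  have hAmn : ∀ t, A m t ≤ A n t := fun t =>
    Nat.div_le_div_left (le_of_lt hmn) hn
  -- division identity
  have hdiv : ∀ x t, 0 < x → t < u → A x (u - 1) / p ^ t = A x (u - 1 - t) := by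
    intro x t hx ht
    have hq : 0 < p ^ t := Nat.pow_pos (by omega)
    have hb : 0 < p ^ (u - 1 - t) * j := Nat.mul_pos (Nat.pow_pos (by omega)) hj
    have hsplit : p ^ (u - 1) * j = p ^ t * (p ^ (u - 1 - t) * j) := by
      rw [← mul_assoc, ← pow_add]
      congr 2
      omega
    simp only [hA]
    rw [Nat.div_div_eq_div_mul, hsplit, mul_comm x (p ^ t),
      DCV.divdiv (p ^ t) x (p ^ (u - 1 - t) * j) hq hx hb]
  -- LHS per-r card
  have hL : ∀ r ∈ Finset.Icc 1 u,
      ((Finset.Icc 1 i).filter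
        (fun k => (p ^ (u - 1) * j - 1) / m < p ^ (r - 1) * k ∧
          p ^ (r - 1) * k ≤ (p ^ (u - 1) * j - 1) / n)).card
      = min i (A n (u - r)) - min i (A m (u - r)) := by
    intro r hr
    simp only [Finset.mem_Icc] at hr
    have hq : 0 < p ^ (r - 1) := Nat.pow_pos (by omega)
    have hrt : r - 1 < u := by omega
    have hur : u - 1 - (r - 1) = u - r := by omega
    have hcond : ∀ k, ((p ^ (u - 1) * j - 1) / m < p ^ (r - 1) * k ∧
        p ^ (r - 1) * k ≤ (p ^ (u - 1) * j - 1) / n)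
        ↔ (A m (u - r) < k ∧ k ≤ A n (u - r)) := by
      intro k
      have h1 : (p ^ (u - 1) * j - 1) / m < p ^ (r - 1) * k ↔ A m (u - r) < k := by
        rw [mul_comm (p ^ (r - 1)) k, ← Nat.div_lt_iff_lt_mul hq,
          show (p ^ (u - 1) * j - 1) / m = A m (u - 1) from rfl,
          hdiv m (r - 1) hm hrt, hur]
      have h2 : p ^ (r - 1) * k ≤ (p ^ (u - 1) * j - 1) / n ↔ k ≤ A n (u - r) := by
        rw [mul_comm (p ^ (r - 1)) k, ← Nat.le_div_iff_mul_le hq,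
          show (p ^ (u - 1) * j - 1) / n = A n (u - 1) from rfl,
          hdiv n (r - 1) hn hrt, hur]
      rw [h1, h2]
    calc ((Finset.Icc 1 i).filter
          (fun k => (p ^ (u - 1) * j - 1) / m < p ^ (r - 1) * k ∧
            p ^ (r - 1) * k ≤ (p ^ (u - 1) * j - 1) / n)).card
        = ((Finset.Icc 1 i).filter
            (fun k => A m (u - r) < k ∧ k ≤ A n (u - r))).card := by
          congr 1; ext k; simp only [Finset.mem_filter, hcond]
      _ = min i (A n (u - r)) - min i (A m (u - r)) := DCV.count_k _ _ _
  -- sP as indicator sum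
  have hR : ∀ x, 0 < x → x ≤ m → ∀ h ∈ Finset.range i,
      (sP p x h j : ℤ) = ∑ t ∈ Finset.range u,
        (if p ^ t * j ≤ x * (h + 1) then (1 : ℤ) else 0) := by
    intro x hx hxm h hh
    simp only [Finset.mem_range] at hh
    have hb : x * (h + 1) < p ^ u * j :=
      lt_of_le_of_lt (Nat.mul_le_mul hxm (by omega)) hbound
    rw [DCV.sP_eq hp2 hj x h u hb, Finset.sum_boole]
  -- per-t inner sum
  have hRt : ∀ t ∈ Finset.range u,
      (∑ h ∈ Finset.range i,
        ((if p ^ t * j ≤ m * (h + 1) then (1 : ℤ) else 0)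
          - (if p ^ t * j ≤ n * (h + 1) then (1 : ℤ) else 0)))
      = ((min i (A n t) : ℕ) : ℤ) - ((min i (A m t) : ℕ) : ℤ) := by
    intro t _
    have hP : 0 < p ^ t * j := Nat.mul_pos (Nat.pow_pos (by omega)) hj
    rw [Finset.sum_sub_distrib]
    have e1 : ∀ x, 0 < x → (∑ h ∈ Finset.range i,
        (if p ^ t * j ≤ x * (h + 1) then (1 : ℤ) else 0))
        = ((i : ℤ) - min (A x t) i) := by
      intro x hx
      rw [Finset.sum_boole, DCV.count_h x (p ^ t * j) i hx hP,
        Nat.cast_sub (min_le_right _ _)]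
    rw [e1 m hm, e1 n hn]
    have h1 : min (A m t) i ≤ i := min_le_right _ _
    have h2 : min (A n t) i ≤ i := min_le_right _ _
    push_cast
    omega
  -- both sides equal Σ_{t<u} (min i (A n t) - min i (A m t)) in ℤ
  have LHSeq : ((∑ r ∈ Finset.Icc 1 u,
      ((Finset.Icc 1 i).filter
        (fun k => (p ^ (u - 1) * j - 1) / m < p ^ (r - 1) * k ∧
          p ^ (r - 1) * k ≤ (p ^ (u - 1) * j - 1) / n)).card : ℕ) : ℤ)
      = ∑ t ∈ Finset.range u,
        (((min i (A n t) : ℕ) : ℤ) - ((min i (A m t) : ℕ) : ℤ)) := by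
    rw [Nat.cast_sum]
    rw [Finset.sum_congr rfl (fun r hr => by
      rw [hL r hr, Nat.cast_sub (min_le_min le_rfl (hAmn (u - r)))])]
    apply Finset.sum_nbij' (fun r => u - r) (fun t => u - t)
    · intro r hr
      simp only [Finset.mem_Icc] at hr
      simp only [Finset.mem_range]
      omega
    · intro t ht
      simp only [Finset.mem_range] at ht
      simp only [Finset.mem_Icc]
      omega
    · intro r hr
      simp only [Finset.mem_Icc] at hr
      omega
    · intro t ht
      simp only [Finset.mem_range] at ht
      omega
    · intro r hr
      rfl
  have RHSeq : (∑ h ∈ Finset.range i, ((sP p m h j : ℤ) - (sP p n h j : ℤ)))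
      = ∑ t ∈ Finset.range u,
        (((min i (A n t) : ℕ) : ℤ) - ((min i (A m t) : ℕ) : ℤ)) := by
    calc (∑ h ∈ Finset.range i, ((sP p m h j : ℤ) - (sP p n h j : ℤ)))
        = ∑ h ∈ Finset.range i, ∑ t ∈ Finset.range u,
          ((if p ^ t * j ≤ m * (h + 1) then (1 : ℤ) else 0)
            - (if p ^ t * j ≤ n * (h + 1) then (1 : ℤ) else 0)) := by
          apply Finset.sum_congr rfl
          intro h hh
          rw [hR m hm le_rfl h hh, hR n hn (le_of_lt hmn) h hh,
            ← Finset.sum_sub_distrib]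
      _ = ∑ t ∈ Finset.range u, ∑ h ∈ Finset.range i,
          ((if p ^ t * j ≤ m * (h + 1) then (1 : ℤ) else 0)
            - (if p ^ t * j ≤ n * (h + 1) then (1 : ℤ) else 0)) := Finset.sum_comm
      _ = _ := Finset.sum_congr rfl hRt
  rw [LHSeq, RHSeq]
end

section
/- Let p be a prime, let u ≥ 1, a ≥ 1 and i ≥ 0 be integers, and let v = min(u, v_p(a) + 1), where v_p(a) is the p-adic valuation of a. Then the number of integers r with 1 ≤ r ≤ u such that p^{r−1} divides a and a/p^{r−1} ≤ i equals: v, if a ≤ i; v − s, if s is an integer with 1 ≤ s < v and ⌊a/p^s⌋ ≤ i < ⌊a/p^{s−1}⌋; and 0, if i < ⌊a/p^{v−1}⌋. -/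
/-- Lemma (gradedmodule), combinatorial form: with `v = min(u, v_p(a) + 1)`, the number of
`r` with `1 ≤ r ≤ u`, `p^{r−1} ∣ a` and `a/p^{r−1} ≤ i` is `v` if `a ≤ i`; is `v − s` if
`1 ≤ s < v` and `⌊a/p^s⌋ ≤ i < ⌊a/p^{s−1}⌋`; and is `0` if `i < ⌊a/p^{v−1}⌋`. -/
theorem gradedmodule_count (p u a i : ℕ) (hp : p.Prime) (hu : 1 ≤ u) (ha : 1 ≤ a) :
    (a ≤ i →
      ((Finset.Icc 1 u).filter (fun r => p ^ (r - 1) ∣ a ∧ a / p ^ (r - 1) ≤ i)).card =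
        min u (padicValNat p a + 1)) ∧
    (∀ s : ℕ, 1 ≤ s → s < min u (padicValNat p a + 1) →
      a / p ^ s ≤ i → i < a / p ^ (s - 1) →
      ((Finset.Icc 1 u).filter (fun r => p ^ (r - 1) ∣ a ∧ a / p ^ (r - 1) ≤ i)).card =
        min u (padicValNat p a + 1) - s) ∧
    (i < a / p ^ (min u (padicValNat p a + 1) - 1) →
      ((Finset.Icc 1 u).filter (fun r => p ^ (r - 1) ∣ a ∧ a / p ^ (r - 1) ≤ i)).card = 0) := by
  haveI : Fact p.Prime := ⟨hp⟩
  have ha0 : a ≠ 0 := by omega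
  set v := min u (padicValNat p a + 1) with hv
  have hv1 : 1 ≤ v := le_min hu (by omega)
  have hdvd : ∀ r : ℕ, p ^ (r - 1) ∣ a ↔ r - 1 ≤ padicValNat p a := fun r =>
    padicValNat_dvd_iff_le ha0
  -- antitonicity of k ↦ a / p^k
  have hanti : ∀ {k l : ℕ}, k ≤ l → a / p ^ l ≤ a / p ^ k := fun {k l} h =>
    Nat.div_le_div_left (Nat.pow_le_pow_right hp.pos h) (pow_pos hp.pos k)
  refine ⟨?_, ?_, ?_⟩
  · intro hai
    have : (Finset.Icc 1 u).filter (fun r => p ^ (r - 1) ∣ a ∧ a / p ^ (r - 1) ≤ i) =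
        Finset.Icc 1 v := by
      ext r
      simp only [Finset.mem_filter, Finset.mem_Icc, hdvd]
      constructor
      · rintro ⟨⟨h1, h2⟩, h3, _⟩; exact ⟨h1, by omega⟩
      · rintro ⟨h1, h2⟩
        refine ⟨⟨h1, by omega⟩, by omega, le_trans (le_trans (hanti (Nat.zero_le _)) ?_) hai⟩
        simp [Nat.div_one]
    rw [this, Nat.card_Icc]; omega
  · intro s hs1 hsv hlo hhi
    have : (Finset.Icc 1 u).filter (fun r => p ^ (r - 1) ∣ a ∧ a / p ^ (r - 1) ≤ i) =
        Finset.Icc (s + 1) v := by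
      ext r
      simp only [Finset.mem_filter, Finset.mem_Icc, hdvd]
      constructor
      · rintro ⟨⟨h1, h2⟩, h3, h4⟩
        refine ⟨?_, by omega⟩
        by_contra hc
        push_neg at hc
        have : a / p ^ (s - 1) ≤ a / p ^ (r - 1) := hanti (by omega)
        omega
      · rintro ⟨h1, h2⟩
        exact ⟨⟨by omega, by omega⟩, by omega, le_trans (hanti (by omega)) hlo⟩
    rw [this, Nat.card_Icc]; omega
  · intro hi
    rw [Finset.card_eq_zero, Finset.filter_eq_empty_iff]
    rintro r hr ⟨h1, h2⟩
    rw [Finset.mem_Icc] at hr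
    rw [hdvd] at h1
    have hrv : r ≤ v := by omega
    have : a / p ^ (v - 1) ≤ a / p ^ (r - 1) := hanti (by omega)
    omega
end

section
/- Let p be a prime, let m ≥ 1, i ≥ 0 and u ≥ 1 be integers, and let j be a positive integer not divisible by p such that m(i+1) < p^u·j. Set d = ⌊(p^{u−1}j − 1)/m⌋. Then the number of integers s with 0 ≤ s ≤ u−1 and ⌊d/p^s⌋ ≤ i equals s_p(m,i,j). -/
/-- Corollary (limitreachedcor), length computation: with `d = ⌊(p^{u−1}j − 1)/m⌋` and
`m(i+1) < p^u·j`, the number of `s` with `0 ≤ s ≤ u−1` and `⌊d/p^s⌋ ≤ i` equals `s_p(m,i,j)`. -/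
theorem length_eq_sP (p m i u j : ℕ) (hp : p.Prime) (hm : 1 ≤ m) (hu : 1 ≤ u)
    (hj : 0 < j) (hpj : ¬ p ∣ j) (hbound : m * (i + 1) < p ^ u * j) :
    ((Finset.range u).filter
        (fun s => ((p ^ (u - 1) * j - 1) / m) / p ^ s ≤ i)).card = sP p m i j := by
  have hp2 : 2 ≤ p := hp.two_le
  set N := m * (i + 1) with hN
  have key : ∀ s < u, (((p ^ (u - 1) * j - 1) / m) / p ^ s ≤ i ↔ p ^ (u - 1 - s) * j ≤ N) := by
    intro s hs
    have hms : 0 < m * p ^ s := by positivity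
    have h1 : 0 < p ^ (u - 1) * j := by positivity
    have hsplit : p ^ (u - 1) = p ^ s * p ^ (u - 1 - s) := by
      rw [← pow_add]; congr 1; omega
    have heq : (i + 1) * (m * p ^ s) = p ^ s * N := by rw [hN]; ring
    have cancel : p ^ (u - 1) * j ≤ p ^ s * N ↔ p ^ (u - 1 - s) * j ≤ N := by
      rw [hsplit, mul_assoc]
      exact ⟨fun h => Nat.le_of_mul_le_mul_left h (by positivity),
        fun h => Nat.mul_le_mul_left _ h⟩
    rw [Nat.div_div_eq_div_mul, ← Nat.lt_succ_iff, Nat.div_lt_iff_lt_mul hms, heq]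
    constructor
    · intro h; exact cancel.mp (by omega)
    · intro h; have := cancel.mpr h; omega
  have hfilter1 : (Finset.range u).filter
        (fun s => ((p ^ (u - 1) * j - 1) / m) / p ^ s ≤ i)
      = (Finset.range u).filter (fun s => p ^ (u - 1 - s) * j ≤ N) := by
    apply Finset.filter_congr
    intro s hs
    simp only [Finset.mem_range] at hs
    simpa using key s hs
  rw [hfilter1]
  have hbij : ((Finset.range u).filter (fun s => p ^ (u - 1 - s) * j ≤ N)).card
      = ((Finset.range u).filter (fun k => p ^ k * j ≤ N)).card := by
    apply Finset.card_bij' (fun s _ => u - 1 - s) (fun k _ => u - 1 - k)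
    · intro a ha
      simp only [Finset.mem_filter, Finset.mem_range] at ha ⊢
      exact ⟨by omega, ha.2⟩
    · intro a ha
      simp only [Finset.mem_filter, Finset.mem_range] at ha ⊢
      refine ⟨by omega, ?_⟩
      have : u - 1 - (u - 1 - a) = a := by omega
      rw [this]; exact ha.2
    · intro a ha
      simp only [Finset.mem_filter, Finset.mem_range] at ha
      omega
    · intro a ha
      simp only [Finset.mem_filter, Finset.mem_range] at ha
      omega
  rw [hbij, sP]
  congr 1
  ext k
  simp only [Finset.mem_filter, Finset.mem_range, ← hN]
  constructor
  · rintro ⟨hk, hP⟩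
    refine ⟨?_, hP⟩
    have h2 : 2 ^ k ≤ p ^ k := Nat.pow_le_pow_left hp2 k
    have h3 : k < 2 ^ k := Nat.lt_two_pow_self (n := k)
    have h4 : p ^ k ≤ p ^ k * j := Nat.le_mul_of_pos_right _ hj
    omega
  · rintro ⟨hk, hP⟩
    refine ⟨?_, hP⟩
    by_contra h
    push_neg at h
    have : p ^ u ≤ p ^ k := Nat.pow_le_pow_right (by omega) h
    have : p ^ u * j ≤ p ^ k * j := Nat.mul_le_mul_right j this
    omega
end

section
/- Let p be a prime, let m > n ≥ 1 and i ≥ 0 be integers, let j be a positive integer not divisible by p, and set t = s_p(n,i,j). Then m·n·(p−1)·( Σ_{h=0}^{i−1} (s_p(m,h,j) − s_p(n,h,j)) + t ) ≥ (m−n)·(p^t − 1)·j. -/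
lemma sP_lt_iff {p j : ℕ} (hp : 1 < p) (hj : 0 < j) (m i k : ℕ) :
    k < sP p m i j ↔ p ^ k * j ≤ m * (i + 1) := by
  set M := m * (i + 1) with hM
  by_cases hjM : j ≤ M
  · have hMj : 0 < M / j := Nat.div_pos hjM hj
    have key : ∀ k, p ^ k * j ≤ M ↔ k ≤ Nat.log p (M / j) := fun k => by
      rw [← Nat.le_div_iff_mul_le hj, ← Nat.le_log_iff_pow_le hp hMj.ne']
    have hL : Nat.log p (M / j) < M :=
      lt_of_lt_of_le (Nat.log_lt_self p hMj.ne') (Nat.div_le_self _ _)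
    have hset : (Finset.range M).filter (fun k => p ^ k * j ≤ M) =
        Finset.range (Nat.log p (M / j) + 1) := by
      ext x
      simp only [Finset.mem_filter, Finset.mem_range, key x]
      omega
    rw [sP, ← hM, hset, Finset.card_range, Nat.lt_succ_iff, key k]
  · have hset : (Finset.range M).filter (fun k => p ^ k * j ≤ M) = ∅ := by
      refine Finset.filter_false_of_mem fun x _ => ?_
      have : j ≤ p ^ x * j := Nat.le_mul_of_pos_left j (Nat.pow_pos (n := x) (by omega))
      omega
    rw [sP, ← hM, hset]
    simp only [Finset.card_empty, Nat.not_lt_zero, false_iff]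
    have : j ≤ p ^ k * j := Nat.le_mul_of_pos_left j (Nat.pow_pos (n := k) (by omega))
    omega

lemma sP_eq_card {p j : ℕ} (hp : 1 < p) (hj : 0 < j) (m i K : ℕ) (hK : sP p m i j ≤ K) :
    sP p m i j = ((Finset.range K).filter (fun k => p ^ k * j ≤ m * (i + 1))).card := by
  have hset : (Finset.range K).filter (fun k => p ^ k * j ≤ m * (i + 1)) =
      Finset.range (sP p m i j) := by
    ext x
    simp only [Finset.mem_filter, Finset.mem_range]
    rw [← sP_lt_iff hp hj m i x]
    omega
  rw [hset, Finset.card_range]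

lemma sP_le (p m i j : ℕ) : sP p m i j ≤ m * (i + 1) := by
  calc sP p m i j ≤ (Finset.range (m * (i+1))).card := Finset.card_filter_le _ _
  _ = m * (i + 1) := Finset.card_range _

/-- The main estimate in the proof of Lemma (exponential), with `t = s_p(n,i,j)` and
denominators cleared:
`mn(p−1)·(Σ_{h=0}^{i−1}(s_p(m,h,j) − s_p(n,h,j)) + t) ≥ (m−n)(p^t − 1)j`. -/
theorem exponential_estimate (p m n i j : ℕ) (hp : p.Prime) (hmn : m > n) (hn : 1 ≤ n)
    (hj : 0 < j) (hpj : ¬ p ∣ j) :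
    ((m : ℤ) * n * ((p : ℤ) - 1)) *
        ((∑ h ∈ Finset.range i, ((sP p m h j : ℤ) - (sP p n h j : ℤ))) +
          (sP p n i j : ℤ)) ≥
      ((m : ℤ) - (n : ℤ)) * ((p : ℤ) ^ (sP p n i j) - 1) * (j : ℤ) := by
  have hp1 : 1 < p := hp.one_lt
  have hm : 0 < m := by omega
  set K := m * (i + 1) with hK
  set t := sP p n i j with ht
  have hKm : ∀ h, h ≤ i → sP p m h j ≤ K := fun h hh =>
    (sP_le p m h j).trans (Nat.mul_le_mul_left m (by omega))
  have hKn : ∀ h, h ≤ i → sP p n h j ≤ K := fun h hh =>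
    (sP_le p n h j).trans (Nat.mul_le_mul (by omega) (by omega))
  have htK : t ≤ K := hKn i le_rfl
  set C : ℕ → Finset ℕ := fun h =>
    (Finset.range K).filter (fun k => n * (h + 1) < p ^ k * j ∧ p ^ k * j ≤ m * (h + 1))
    with hC
  have keyh : ∀ h < i, sP p m h j = sP p n h j + (C h).card := by
    intro h hh
    have hnm : n * (h + 1) ≤ m * (h + 1) := Nat.mul_le_mul (by omega) le_rfl
    have hAm := sP_eq_card hp1 hj m h K (hKm h hh.le)
    have hAn := sP_eq_card hp1 hj n h K (hKn h hh.le)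
    have hs1 : ((Finset.range K).filter (fun k => p ^ k * j ≤ m * (h + 1))).filter
        (fun k => p ^ k * j ≤ n * (h + 1)) =
        (Finset.range K).filter (fun k => p ^ k * j ≤ n * (h + 1)) := by
      rw [Finset.filter_filter]
      ext x
      simp only [Finset.mem_filter, Finset.mem_range]
      omega
    have hs2 : ((Finset.range K).filter (fun k => p ^ k * j ≤ m * (h + 1))).filter
        (fun k => ¬ p ^ k * j ≤ n * (h + 1)) = C h := by
      rw [Finset.filter_filter, hC]
      ext x
      simp only [Finset.mem_filter, Finset.mem_range]
      omega
    rw [hAm, hAn,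
      ← Finset.card_filter_add_card_filter_not
        (s := (Finset.range K).filter (fun k => p ^ k * j ≤ m * (h + 1)))
        (fun k => p ^ k * j ≤ n * (h + 1)),
      hs1, hs2]
  set D : ℕ → Finset ℕ := fun k =>
    (Finset.range i).filter (fun h => n * (h + 1) < p ^ k * j ∧ p ^ k * j ≤ m * (h + 1))
    with hD
  have swap : ∑ h ∈ Finset.range i, (C h).card = ∑ k ∈ Finset.range K, (D k).card := by
    have hCc : ∀ h, (C h).card = ∑ k ∈ Finset.range K,
        (if n * (h + 1) < p ^ k * j ∧ p ^ k * j ≤ m * (h + 1) then 1 else 0) := fun h =>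
      Finset.card_filter _ _
    simp only [hCc]
    rw [Finset.sum_comm]
    refine Finset.sum_congr rfl fun k _ => ?_
    rw [hD, Finset.card_filter]
  have hrestrict : ∑ k ∈ Finset.range t, (D k).card ≤ ∑ k ∈ Finset.range K, (D k).card :=
    Finset.sum_le_sum_of_subset (Finset.range_subset_range.mpr htK)
  -- per-k bound
  have perk : ∀ k ∈ Finset.range t, ((m : ℤ) - n) * ((p : ℤ) ^ k * j) ≤
      ((m : ℤ) * n) * (((D k).card : ℤ) + 1) := by
    intro k hk
    rw [Finset.mem_range] at hk
    set a := p ^ k * j with ha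
    have ha1 : 1 ≤ a := by
      have h0 : 0 < p ^ k := Nat.pow_pos (n := k) (by omega)
      have := Nat.mul_pos h0 hj
      omega
    have han : a ≤ n * (i + 1) := (sP_lt_iff hp1 hj n i k).mp hk
    set l := (a - 1) / m with hl
    set u := (a - 1) / n with hu
    have hlu : l ≤ u := Nat.div_le_div_left (by omega) (by omega)
    have hsub : Finset.Ico l u ⊆ D k := by
      intro h hh
      rw [Finset.mem_Ico] at hh
      obtain ⟨hh1, hh2⟩ := hh
      have h2 : (h + 1) * n ≤ a - 1 := (Nat.le_div_iff_mul_le (by omega)).mp hh2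
      have h2' : n * (h + 1) ≤ a - 1 := by rw [mul_comm]; exact h2
      have h3 : n * (h + 1) < a := by omega
      have h4 : a ≤ m * (h + 1) := by
        have e1 : m * l + (a - 1) % m = a - 1 := Nat.div_add_mod (a - 1) m
        have e2 : (a - 1) % m < m := Nat.mod_lt _ hm
        have e3 : m * (l + 1) ≤ m * (h + 1) := Nat.mul_le_mul_left m (by omega)
        have e4 : m * (l + 1) = m * l + m := by ring
        omega
      have h5 : h < i := by
        have h6 : n * (h + 1) < n * (i + 1) := h3.trans_le han
        have := Nat.lt_of_mul_lt_mul_left h6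
        omega
      rw [hD]
      simp only [Finset.mem_filter, Finset.mem_range]
      exact ⟨h5, h3, h4⟩
    have hcard : u - l ≤ (D k).card := by
      have := Finset.card_le_card hsub
      rwa [Nat.card_Ico] at this
    have elN : m * l ≤ a - 1 := by rw [hl, mul_comm]; exact Nat.div_mul_le_self _ _
    have euN : a - 1 < n * u + n := by
      have e1 : n * u + (a - 1) % n = a - 1 := Nat.div_add_mod (a - 1) n
      have e2 : (a - 1) % n < n := Nat.mod_lt _ (by omega)
      omega
    have hcast : ((u : ℤ) - l) ≤ ((D k).card : ℤ) := by
      have h7 := (Nat.cast_le (α := ℤ)).mpr hcard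
      rwa [Nat.cast_sub hlu] at h7
    have elZ : (m : ℤ) * l ≤ (a : ℤ) - 1 := by
      zify [ha1] at elN; exact elN
    have euZ : (a : ℤ) - 1 < (n : ℤ) * u + n := by
      zify [ha1] at euN; exact euN
    have hmn' : (n : ℤ) < m := by exact_mod_cast hmn
    have hn' : (1 : ℤ) ≤ n := by exact_mod_cast hn
    have ha' : (1 : ℤ) ≤ (a : ℤ) := by exact_mod_cast ha1
    have hgoal : ((m : ℤ) - n) * (a : ℤ) ≤ ((m : ℤ) * n) * (((D k).card : ℤ) + 1) := by
      nlinarith [mul_le_mul_of_nonneg_left hcast (by positivity : (0:ℤ) ≤ (m:ℤ) * n),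
        mul_le_mul_of_nonneg_left (show (a:ℤ) - n ≤ (n:ℤ) * u by linarith)
          (by positivity : (0:ℤ) ≤ (m:ℤ)),
        mul_le_mul_of_nonneg_left elZ (by linarith : (0:ℤ) ≤ (n:ℤ))]
    have haZ : (a : ℤ) = (p : ℤ) ^ k * j := by rw [ha]; push_cast; ring
    rw [← haZ]
    exact hgoal
  -- assemble
  have hps : (0:ℤ) ≤ (p:ℤ) - 1 := by
    have : (1:ℤ) ≤ p := by exact_mod_cast hp1.le
    omega
  set S := ∑ h ∈ Finset.range i, ((sP p m h j : ℤ) - (sP p n h j : ℤ)) with hS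
  have step1 : S = ∑ k ∈ Finset.range K, ((D k).card : ℤ) := by
    rw [hS]
    have : ∀ h ∈ Finset.range i, (sP p m h j : ℤ) - (sP p n h j : ℤ) = ((C h).card : ℤ) := by
      intro h hh
      rw [Finset.mem_range] at hh
      have h8 : (sP p m h j : ℤ) = (sP p n h j : ℤ) + ((C h).card : ℤ) := by
        exact_mod_cast congrArg (Nat.cast : ℕ → ℤ) (keyh h hh)
      omega
    rw [Finset.sum_congr rfl this]
    exact_mod_cast congrArg (Nat.cast : ℕ → ℤ) swap
  have step2 : (∑ k ∈ Finset.range t, ((D k).card : ℤ)) + t ≤ S + t := by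
    rw [step1]
    have : (∑ k ∈ Finset.range t, ((D k).card : ℤ)) ≤
        ∑ k ∈ Finset.range K, ((D k).card : ℤ) := by exact_mod_cast hrestrict
    omega
  have step3 : ((m : ℤ) - n) * (∑ k ∈ Finset.range t, (p : ℤ) ^ k) * j ≤
      ((m : ℤ) * n) * ((∑ k ∈ Finset.range t, ((D k).card : ℤ)) + t) := by
    have expand : ((m : ℤ) * n) * ((∑ k ∈ Finset.range t, ((D k).card : ℤ)) + t) =
        ∑ k ∈ Finset.range t, ((m : ℤ) * n) * (((D k).card : ℤ) + 1) := by
      have : ∀ k ∈ Finset.range t, ((m : ℤ) * n) * (((D k).card : ℤ) + 1) =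
          ((m : ℤ) * n) * ((D k).card : ℤ) + (m : ℤ) * n := fun k _ => by ring
      rw [Finset.sum_congr rfl this, Finset.sum_add_distrib, ← Finset.mul_sum,
        Finset.sum_const, Finset.card_range, nsmul_eq_mul]
      ring
    have expand2 : ((m : ℤ) - n) * (∑ k ∈ Finset.range t, (p : ℤ) ^ k) * j =
        ∑ k ∈ Finset.range t, ((m : ℤ) - n) * ((p : ℤ) ^ k * j) := by
      rw [Finset.mul_sum, Finset.sum_mul]
      refine Finset.sum_congr rfl fun k _ => by ring
    rw [expand, expand2]
    exact Finset.sum_le_sum perk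
  have big : ((m : ℤ) - n) * (∑ k ∈ Finset.range t, (p : ℤ) ^ k) * j ≤
      ((m : ℤ) * n) * (S + t) :=
    step3.trans (mul_le_mul_of_nonneg_left step2 (by positivity : (0:ℤ) ≤ (m:ℤ) * n))
  calc ((m : ℤ) - (n : ℤ)) * ((p : ℤ) ^ t - 1) * (j : ℤ)
      = ((p : ℤ) - 1) * (((m : ℤ) - n) * (∑ k ∈ Finset.range t, (p : ℤ) ^ k) * j) := by
        rw [← geom_sum_mul (p : ℤ) t]
        ring
    _ ≤ ((p : ℤ) - 1) * (((m : ℤ) * n) * (S + t)) := mul_le_mul_of_nonneg_left big hps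
    _ = ((m : ℤ) * n * ((p : ℤ) - 1)) * (S + t) := by ring
end
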